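/- arXiv:1312.1706 — 2 statements merged into one kernel-verified Lean document; each statement's English description precedes it below -/
import Mathlib

section
/- Let X be an n×p real matrix and A1, A2 ⊆ {1,...,p} disjoint index sets such that X_{A1∪A2} has full column rank. Then the minimum eigenvalue of (X_{A1∪A2}ᵀ X_{A1∪A2})⁻¹ is at most the minimum eigenvalue of (X_{A1}ᵀ Π⊥[A2] X_{A1})⁻¹, and the maximum eigenvalue of (X_{A1}ᵀ Π⊥[A2] X_{A1})⁻¹ is at most the maximum eigenvalue of (X_{A1∪A2}ᵀ X_{A1∪A2})⁻¹. -/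
open Matrix

/-- Submatrix of columns of `X` indexed by the finite set `S`. -/
noncomputable def cols {n p : ℕ} (X : Matrix (Fin n) (Fin p) ℝ) (S : Finset (Fin p)) :
    Matrix (Fin n) {x // x ∈ S} ℝ :=
  Matrix.of fun i j => X i j.1

/-- Orthogonal projection onto the column span of `X_S`. -/
noncomputable def proj {n p : ℕ} (X : Matrix (Fin n) (Fin p) ℝ) (S : Finset (Fin p)) :
    Matrix (Fin n) (Fin n) ℝ :=
  cols X S * ((cols X S)ᵀ * cols X S)⁻¹ * (cols X S)ᵀ

/-!
Write `M = X_{A1∪A2}ᵀ X_{A1∪A2}` in blocks along `A1 ⊕ A2`. Its `A2`-block is invertible and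
the Schur complement of that block is `X_{A1}ᵀ Π⊥[A2] X_{A1}`, so the inverse of the latter is
the `A1 × A1` principal submatrix of `M⁻¹`. Each eigenvalue of a principal submatrix of a
symmetric matrix is the Rayleigh quotient of the full matrix at a zero-padded eigenvector, hence
lies between the extreme eigenvalues of the full matrix.
-/

namespace Matrix

variable {m m' n m₁ m₂ R : Type*}

section ZeroPadding

variable [Fintype m] [Fintype m'] {e : m' → m}

theorem dotProduct_extend_zero [NonUnitalNonAssocSemiring R] (he : Function.Injective e)
    (u : m → R) (v : m' → R) :
    u ⬝ᵥ Function.extend e v 0 = (u ∘ e) ⬝ᵥ v := by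
  classical
  rw [dotProduct, ← Finset.sum_subset (Finset.subset_univ (Finset.univ.image e)),
    Finset.sum_image fun _ _ _ _ h => he h]
  · simp only [he.extend_apply]
    rfl
  · intro k _ hk
    rw [Function.extend_apply' _ _ _ (by simpa using hk), Pi.zero_apply, mul_zero]

theorem extend_zero_dotProduct_extend_zero [NonUnitalNonAssocSemiring R]
    (he : Function.Injective e) (v : m' → R) :
    Function.extend e v 0 ⬝ᵥ Function.extend e v 0 = v ⬝ᵥ v := by
  rw [dotProduct_extend_zero he, Function.extend_comp he]

theorem dotProduct_submatrix_mulVec [CommSemiring R] (A : Matrix m m R)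
    (he : Function.Injective e) (v : m' → R) :
    v ⬝ᵥ A.submatrix e e *ᵥ v = Function.extend e v 0 ⬝ᵥ A *ᵥ Function.extend e v 0 := by
  have hmulVec : A.submatrix e e *ᵥ v = (A *ᵥ Function.extend e v 0) ∘ e := by
    ext i
    simp only [Function.comp_apply, mulVec, dotProduct_extend_zero he]
    rfl
  rw [hmulVec, dotProduct_comm, dotProduct_comm _ (A *ᵥ _), dotProduct_extend_zero he]

end ZeroPadding

section SchurComplement

variable [CommRing R] [Fintype m₁] [DecidableEq m₁] [Fintype m₂] [DecidableEq m₂]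

theorem toBlocks₁₁_inv_fromBlocks (A : Matrix m₁ m₁ R) (B : Matrix m₁ m₂ R)
    (C : Matrix m₂ m₁ R) (D : Matrix m₂ m₂ R) (hD : IsUnit D.det)
    (h : IsUnit (fromBlocks A B C D).det) :
    (fromBlocks A B C D)⁻¹.toBlocks₁₁ = (A - B * D⁻¹ * C)⁻¹ := by
  let := D.invertibleOfIsUnitDet hD
  let := (fromBlocks A B C D).invertibleOfIsUnitDet h
  let := invertibleOfFromBlocks₂₂Invertible A B C D
  rw [← invOf_eq_nonsing_inv, invOf_fromBlocks₂₂_eq, toBlocks_fromBlocks₁₁, invOf_eq_nonsing_inv,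
    invOf_eq_nonsing_inv]

theorem toBlocks₁₁_inv_transpose_mul_self_fromCols [Fintype n] [DecidableEq n]
    (Y₁ : Matrix n m₁ R) (Y₂ : Matrix n m₂ R) (hY₂ : IsUnit (Y₂ᵀ * Y₂).det)
    (hY : IsUnit ((fromCols Y₁ Y₂)ᵀ * fromCols Y₁ Y₂).det) :
    ((fromCols Y₁ Y₂)ᵀ * fromCols Y₁ Y₂)⁻¹.toBlocks₁₁ =
      (Y₁ᵀ * (1 - Y₂ * (Y₂ᵀ * Y₂)⁻¹ * Y₂ᵀ) * Y₁)⁻¹ := by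
  rw [transpose_fromCols, fromRows_mul_fromCols] at hY ⊢
  rw [toBlocks₁₁_inv_fromBlocks _ _ _ _ hY₂ hY]
  simp only [Matrix.mul_sub, Matrix.sub_mul, Matrix.mul_one, Matrix.mul_assoc]

end SchurComplement

theorem posDef_transpose_mul_self_of_linearIndependent [Fintype n] [Fintype m] [DecidableEq m]
    (Y : Matrix n m ℝ) (hY : LinearIndependent ℝ Yᵀ) : (Yᵀ * Y).PosDef :=
  PosDef.conjTranspose_mul_self Y (mulVec_injective_iff.mpr hY)

namespace IsHermitian

variable [Fintype m] [DecidableEq m] {A : Matrix m m ℝ}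

theorem exists_dotProduct_mulVec_eq_sum_eigenvalues (hA : A.IsHermitian) (x : m → ℝ) :
    ∃ y : m → ℝ, x ⬝ᵥ A *ᵥ x = ∑ i, hA.eigenvalues i * y i ^ 2 ∧ x ⬝ᵥ x = ∑ i, y i ^ 2 := by
  set U : Matrix m m ℝ := (hA.eigenvectorUnitary : Matrix m m ℝ)
  have hstar : star U = Uᵀ := by
    simp [star_eq_conjTranspose, conjTranspose_eq_transpose_of_trivial]
  have hU : U * Uᵀ = 1 := hstar ▸ mem_unitaryGroup_iff.mp hA.eigenvectorUnitary.2
  refine ⟨Uᵀ *ᵥ x, ?_, ?_⟩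
  · conv_lhs => rw [hA.spectral_theorem, Unitary.conjStarAlgAut_apply]
    rw [hstar, ← mulVec_mulVec, ← mulVec_mulVec, dotProduct_mulVec x U, ← mulVec_transpose]
    simp only [dotProduct, mulVec_diagonal]
    refine Finset.sum_congr rfl fun i _ => ?_
    simp only [RCLike.ofReal_real_eq_id, Function.comp_apply, id_eq]
    ring
  · calc x ⬝ᵥ x = x ⬝ᵥ (U * Uᵀ) *ᵥ x := by rw [hU, one_mulVec]
      _ = ∑ i, (Uᵀ *ᵥ x) i ^ 2 := by
        rw [← mulVec_mulVec, dotProduct_mulVec x U, ← mulVec_transpose]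
        simp only [dotProduct, sq]

theorem iInf_eigenvalues_mul_le (hA : A.IsHermitian) (x : m → ℝ) :
    (⨅ i, hA.eigenvalues i) * (x ⬝ᵥ x) ≤ x ⬝ᵥ A *ᵥ x := by
  obtain ⟨y, hAx, hx⟩ := hA.exists_dotProduct_mulVec_eq_sum_eigenvalues x
  rw [hAx, hx, Finset.mul_sum]
  exact Finset.sum_le_sum fun i _ => mul_le_mul_of_nonneg_right
    (ciInf_le (Set.finite_range _).bddBelow i) (sq_nonneg _)

theorem le_iSup_eigenvalues_mul (hA : A.IsHermitian) (x : m → ℝ) :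
    x ⬝ᵥ A *ᵥ x ≤ (⨆ i, hA.eigenvalues i) * (x ⬝ᵥ x) := by
  obtain ⟨y, hAx, hx⟩ := hA.exists_dotProduct_mulVec_eq_sum_eigenvalues x
  rw [hAx, hx, Finset.mul_sum]
  exact Finset.sum_le_sum fun i _ => mul_le_mul_of_nonneg_right
    (le_ciSup (Set.finite_range _).bddAbove i) (sq_nonneg _)

theorem exists_dotProduct_self_eq_one_and_eq_eigenvalues (hA : A.IsHermitian) (i : m) :
    ∃ v : m → ℝ, v ⬝ᵥ v = 1 ∧ v ⬝ᵥ A *ᵥ v = hA.eigenvalues i := by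
  refine ⟨hA.eigenvectorBasis i, ?_, by simpa using (hA.eigenvalues_eq i).symm⟩
  have h := real_inner_self_eq_norm_sq (hA.eigenvectorBasis i)
  rw [hA.eigenvectorBasis.orthonormal.1 i, one_pow, EuclideanSpace.inner_eq_star_dotProduct] at h
  simpa using h

variable [Fintype m'] [DecidableEq m'] [Nonempty m'] {e : m' → m}

theorem iInf_eigenvalues_le_iInf_eigenvalues_submatrix (hA : A.IsHermitian)
    (he : Function.Injective e) (hB : (A.submatrix e e).IsHermitian) :
    ⨅ i, hA.eigenvalues i ≤ ⨅ j, hB.eigenvalues j := by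
  refine le_ciInf fun j => ?_
  obtain ⟨v, hv, hBv⟩ := hB.exists_dotProduct_self_eq_one_and_eq_eigenvalues j
  simpa [← hBv, dotProduct_submatrix_mulVec A he, extend_zero_dotProduct_extend_zero he, hv]
    using hA.iInf_eigenvalues_mul_le (Function.extend e v 0)

theorem iSup_eigenvalues_submatrix_le_iSup_eigenvalues (hA : A.IsHermitian)
    (he : Function.Injective e) (hB : (A.submatrix e e).IsHermitian) :
    ⨆ j, hB.eigenvalues j ≤ ⨆ i, hA.eigenvalues i := by
  refine ciSup_le fun j => ?_
  obtain ⟨v, hv, hBv⟩ := hB.exists_dotProduct_self_eq_one_and_eq_eigenvalues j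
  simpa [← hBv, dotProduct_submatrix_mulVec A he, extend_zero_dotProduct_extend_zero he, hv]
    using hA.le_iSup_eigenvalues_mul (Function.extend e v 0)

end IsHermitian

end Matrix

theorem cols_union_submatrix_finsetUnion_eq_fromCols {n p : ℕ} (X : Matrix (Fin n) (Fin p) ℝ)
    (A1 A2 : Finset (Fin p)) (h : Disjoint A1 A2) :
    (cols X (A1 ∪ A2)).submatrix id (Equiv.Finset.union A1 A2 h) =
      fromCols (cols X A1) (cols X A2) := by
  ext i (j | j) <;> rfl

theorem inv_transpose_mul_one_sub_proj_mul_cols_eq_submatrix {n p : ℕ}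
    (X : Matrix (Fin n) (Fin p) ℝ) (A1 A2 : Finset (Fin p)) (h : Disjoint A1 A2)
    (hli : LinearIndependent ℝ (fun j : {x // x ∈ A1 ∪ A2} => fun i => X i j.1)) :
    ((cols X A1)ᵀ * (1 - proj X A2) * cols X A1)⁻¹ =
      (((cols X (A1 ∪ A2))ᵀ * cols X (A1 ∪ A2))⁻¹).submatrix
        (Equiv.Finset.union A1 A2 h ∘ Sum.inl) (Equiv.Finset.union A1 A2 h ∘ Sum.inl) := by
  let φ := Equiv.Finset.union A1 A2 h
  let Y := cols X (A1 ∪ A2)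
  have hgram : (fromCols (cols X A1) (cols X A2))ᵀ * fromCols (cols X A1) (cols X A2) =
      (Yᵀ * Y).submatrix φ φ := by
    rw [← cols_union_submatrix_finsetUnion_eq_fromCols X A1 A2 h, transpose_submatrix,
      submatrix_mul _ _ _ _ _ Function.bijective_id]
  have hY : ((Yᵀ * Y).submatrix φ φ).PosDef :=
    (posDef_transpose_mul_self_of_linearIndependent Y hli).submatrix φ.injective
  have hY₂ : ((cols X A2)ᵀ * cols X A2).PosDef :=
    posDef_transpose_mul_self_of_linearIndependent _
      (hli.comp (φ ∘ Sum.inr) (φ.injective.comp Sum.inr_injective))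
  calc ((cols X A1)ᵀ * (1 - proj X A2) * cols X A1)⁻¹
      = ((fromCols (cols X A1) (cols X A2))ᵀ * fromCols (cols X A1) (cols X A2))⁻¹.toBlocks₁₁ :=
        (toBlocks₁₁_inv_transpose_mul_self_fromCols _ _ ((isUnit_iff_isUnit_det _).mp hY₂.isUnit)
          (hgram ▸ (isUnit_iff_isUnit_det _).mp hY.isUnit)).symm
    _ = ((Yᵀ * Y)⁻¹).submatrix (φ ∘ Sum.inl) (φ ∘ Sum.inl) := by
      rw [hgram, inv_submatrix_equiv]
      rfl

/-- Interlacing-type bounds: `λ_min((X_{A1∪A2}ᵀX_{A1∪A2})⁻¹) ≤ λ_min((X_{A1}ᵀΠ⊥[A2]X_{A1})⁻¹)`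
and `λ_max((X_{A1}ᵀΠ⊥[A2]X_{A1})⁻¹) ≤ λ_max((X_{A1∪A2}ᵀX_{A1∪A2})⁻¹)`. -/
theorem stmt2 {n p : ℕ} (X : Matrix (Fin n) (Fin p) ℝ) (A1 A2 : Finset (Fin p))
    (hdisj : Disjoint A1 A2) (hA1 : A1.Nonempty)
    (hli : LinearIndependent ℝ (fun j : {x // x ∈ A1 ∪ A2} => fun i => X i j.1))
    (h1 : (((cols X (A1 ∪ A2))ᵀ * cols X (A1 ∪ A2))⁻¹).IsHermitian)
    (h2 : (((cols X A1)ᵀ * (1 - proj X A2) * cols X A1)⁻¹).IsHermitian) :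
    (⨅ i, h1.eigenvalues i) ≤ (⨅ i, h2.eigenvalues i) ∧
      (⨆ i, h2.eigenvalues i) ≤ (⨆ i, h1.eigenvalues i) := by
  have : Nonempty A1 := hA1.to_subtype
  have he : Function.Injective (Equiv.Finset.union A1 A2 hdisj ∘ Sum.inl) :=
    (Equiv.injective _).comp Sum.inl_injective
  revert h2
  rw [inv_transpose_mul_one_sub_proj_mul_cols_eq_submatrix X A1 A2 hdisj hli]
  exact fun h2 => ⟨h1.iInf_eigenvalues_le_iInf_eigenvalues_submatrix he h2,
    h1.iSup_eigenvalues_submatrix_le_iSup_eigenvalues he h2⟩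
end

section
/- Let S*, S ⊆ {1,...,p} with |S| = |S*| = k and ℓ = |S*∖S| ≥ 1, and let X be n×p with ρ_{2k} > 0, where ρ_{2k} is the infimum of ‖Xθ‖₂²/(n‖θ‖₂²) over θ with ‖θ‖₀ ≤ 2k and S* ⊆ supp(θ). Then for ξ = Xβ* with supp(β*) = S* and β_min = min_{i∈S*}|β*_i|, the projected signal energy satisfies ‖Π⊥[S] ξ‖₂² ≥ ℓ n ρ_{2k} β_min². -/
/-!
Write `P = proj X S`. Since `P ξ` lies in the column span of `X_S`, the residual `(1 - P) ξ`
equals `X θ` with `θ = β* - γ` for some `γ` supported on `S`. Then `θ` is supported on `S ∪ S*`,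
of size at most `2k`, and agrees with `β*` on the `ℓ` coordinates of `S* \ S`, so
`‖θ‖² ≥ ℓ β_min²`. The restricted eigenvalue bound needs `θ` to be nonzero on all of `S*`;
perturbing `θ` by `ε` on `S*` achieves this for small `ε > 0`, and the bound passes to `ε → 0`.
-/

open Matrix
open scoped Classical

/-- Squared Euclidean norm of a vector. -/
noncomputable def sqnorm {m : Type*} [Fintype m] (v : m → ℝ) : ℝ := ∑ i, v i ^ 2

open Filter Topology

section ColumnSpan

variable {n p : ℕ} (X : Matrix (Fin n) (Fin p) ℝ) (S : Finset (Fin p))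

theorem cols_mulVec (c : {x // x ∈ S} → ℝ) :
    cols X S *ᵥ c = X *ᵥ fun j => if h : j ∈ S then c ⟨j, h⟩ else 0 := by
  funext i
  simp only [mulVec, dotProduct, cols, of_apply, mul_dite, mul_zero]
  rw [← Finset.sum_subset (Finset.subset_univ S) fun j _ hj => dif_neg hj, ← Finset.sum_coe_sort S]
  simp

theorem exists_proj_mulVec_eq (v : Fin n → ℝ) :
    ∃ γ : Fin p → ℝ, (∀ j ∉ S, γ j = 0) ∧ proj X S *ᵥ v = X *ᵥ γ := by
  rw [proj, Matrix.mul_assoc, ← mulVec_mulVec, cols_mulVec]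
  exact ⟨_, fun j hj => dif_neg hj, rfl⟩

end ColumnSpan

theorem eventually_add_ne_zero_nhdsGT (a : ℝ) : ∀ᶠ ε in 𝓝[>] (0 : ℝ), a + ε ≠ 0 := by
  rcases eq_or_ne a 0 with rfl | ha
  · filter_upwards [self_mem_nhdsWithin] with ε hε
    simpa using (ne_of_gt hε)
  · refine nhdsWithin_le_nhds (Tendsto.eventually_ne ?_ ha)
    simpa using (continuous_const_add a).tendsto 0

theorem card_mul_sq_le_sum_sq {ι : Type*} [Fintype ι] {T : Finset ι} {θ : ι → ℝ} {m : ℝ}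
    (hm : 0 ≤ m) (hT : ∀ i ∈ T, m ≤ |θ i|) : T.card * m ^ 2 ≤ ∑ i, θ i ^ 2 :=
  calc T.card * m ^ 2 ≤ ∑ i ∈ T, θ i ^ 2 := by
        rw [← nsmul_eq_mul]
        exact Finset.card_nsmul_le_sum _ _ _ fun i hi => by
          simpa only [sq_abs] using pow_le_pow_left₀ hm (hT i hi) 2
    _ ≤ ∑ i, θ i ^ 2 :=
        Finset.sum_le_sum_of_subset_of_nonneg (Finset.subset_univ _) fun i _ _ => sq_nonneg _

theorem restricted_bound_of_support_subset {n p k : ℕ} (X : Matrix (Fin n) (Fin p) ℝ)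
    {Sstar T : Finset (Fin p)} {ρ : ℝ}
    (hρ : ∀ θ : Fin p → ℝ,
      (Finset.univ.filter (fun i => θ i ≠ 0)).card ≤ 2 * k →
      (∀ i ∈ Sstar, θ i ≠ 0) →
      ρ * ((n : ℝ) * ∑ i, θ i ^ 2) ≤ ∑ i, (X *ᵥ θ) i ^ 2)
    (hT : T.card ≤ 2 * k) (hST : Sstar ⊆ T) {θ : Fin p → ℝ} (hθ : ∀ i ∉ T, θ i = 0) :
    ρ * ((n : ℝ) * ∑ i, θ i ^ 2) ≤ ∑ i, (X *ᵥ θ) i ^ 2 := by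
  set δ : Fin p → ℝ := (Sstar : Set (Fin p)).indicator 1
  set θε : ℝ → Fin p → ℝ := fun ε => θ + ε • δ
  have hsupp : ∀ ε, (Finset.univ.filter (fun i => θε ε i ≠ 0)).card ≤ 2 * k := by
    refine fun ε => le_trans (Finset.card_le_card fun i hi => ?_) hT
    by_contra hiT
    have hδ : δ i = 0 := Set.indicator_of_notMem (fun h => hiT (hST h)) _
    simp [θε, hθ i hiT, hδ] at hi
  have hnonvanishing : ∀ᶠ ε in 𝓝[>] (0 : ℝ), ∀ i ∈ Sstar, θε ε i ≠ 0 := by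
    refine (Filter.eventually_all_finset Sstar).2 fun i hi => ?_
    have hδ : δ i = 1 := Set.indicator_of_mem (Finset.mem_coe.2 hi) _
    simpa [θε, hδ] using eventually_add_ne_zero_nhdsGT (θ i)
  have hlim : Tendsto θε (𝓝[>] 0) (𝓝 θ) := by
    have : Continuous θε := by fun_prop
    simpa [θε] using (this.tendsto 0).mono_left nhdsWithin_le_nhds
  refine le_of_tendsto_of_tendsto ?_ ?_ (hnonvanishing.mono fun ε hε => hρ _ (hsupp ε) hε)
  · exact ((by fun_prop : Continuous fun v : Fin p → ℝ => ρ * ((n : ℝ) * ∑ i, v i ^ 2))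
      |>.tendsto θ).comp hlim
  · exact ((by fun_prop : Continuous fun v : Fin p → ℝ => ∑ i, (X *ᵥ v) i ^ 2)
      |>.tendsto θ).comp hlim

theorem stmt12_general {n p : ℕ} (X : Matrix (Fin n) (Fin p) ℝ) (k : ℕ)
    (Sstar S : Finset (Fin p)) (hScard : S.card = k) (hSstarcard : Sstar.card = k)
    (β : Fin p → ℝ) (hsupp : ∀ i, β i ≠ 0 ↔ i ∈ Sstar) (hSne : Sstar.Nonempty)
    (ρ : ℝ) (hρpos : 0 < ρ)
    (hρ : ∀ θ : Fin p → ℝ,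
      (Finset.univ.filter (fun i => θ i ≠ 0)).card ≤ 2 * k →
      (∀ i ∈ Sstar, θ i ≠ 0) →
      ρ * ((n : ℝ) * ∑ i, θ i ^ 2) ≤ ∑ i, (X *ᵥ θ) i ^ 2)
    (ℓ : ℕ) (hℓ : ℓ = (Sstar \ S).card) :
    (ℓ : ℝ) * n * ρ * (Sstar.inf' hSne fun i => |β i|) ^ 2 ≤
      sqnorm ((1 - proj X S) *ᵥ (X *ᵥ β)) := by
  obtain ⟨γ, hγ, hproj⟩ := exists_proj_mulVec_eq X S (X *ᵥ β)
  have hresidual : (1 - proj X S) *ᵥ (X *ᵥ β) = X *ᵥ (β - γ) := by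
    rw [sub_mulVec, one_mulVec, hproj, mulVec_sub]
  have hβ : ∀ i ∉ Sstar, β i = 0 := fun i hi => not_ne_iff.mp ((hsupp i).not.mpr hi)
  have hRE := restricted_bound_of_support_subset X hρ (T := S ∪ Sstar)
    (by simpa [hScard, hSstarcard, two_mul] using Finset.card_union_le S Sstar)
    Finset.subset_union_right (θ := β - γ) fun i hi => by
      rw [Finset.mem_union, not_or] at hi
      simp [hβ i hi.2, hγ i hi.1]
  set m := Sstar.inf' hSne fun i => |β i|
  have hm : 0 ≤ m := Finset.le_inf' hSne _ fun i _ => abs_nonneg _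
  have hθ : (ℓ : ℝ) * m ^ 2 ≤ ∑ i, (β - γ) i ^ 2 := by
    rw [hℓ]
    refine card_mul_sq_le_sum_sq hm fun i hi => ?_
    rw [Finset.mem_sdiff] at hi
    simpa [hγ i hi.2] using Finset.inf'_le (fun i => |β i|) hi.1
  calc (ℓ : ℝ) * n * ρ * m ^ 2 = ρ * ((n : ℝ) * ((ℓ : ℝ) * m ^ 2)) := by ring
    _ ≤ ρ * ((n : ℝ) * ∑ i, (β - γ) i ^ 2) := by gcongr
    _ ≤ sqnorm ((1 - proj X S) *ᵥ (X *ᵥ β)) := by rw [hresidual]; exact hRE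

/-- Projected signal energy lower bound: for `ξ = Xβ*`, `ℓ = |S*∖S| ≥ 1`, and restricted
eigenvalue `ρ_{2k}`, it holds that `‖Π⊥[S]ξ‖₂² ≥ ℓ n ρ_{2k} β_min²`. -/
theorem stmt12 {n p : ℕ} (X : Matrix (Fin n) (Fin p) ℝ) (k : ℕ)
    (Sstar S : Finset (Fin p)) (hScard : S.card = k) (hSstarcard : Sstar.card = k)
    (β : Fin p → ℝ) (hsupp : ∀ i, β i ≠ 0 ↔ i ∈ Sstar) (hSne : Sstar.Nonempty)
    (hli : LinearIndependent ℝ (fun j : {x // x ∈ S} => fun i => X i j.1))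
    (ρ : ℝ) (hρpos : 0 < ρ)
    (hρ : ∀ θ : Fin p → ℝ,
      (Finset.univ.filter (fun i => θ i ≠ 0)).card ≤ 2 * k →
      (∀ i ∈ Sstar, θ i ≠ 0) →
      ρ * ((n : ℝ) * ∑ i, θ i ^ 2) ≤ ∑ i, (X *ᵥ θ) i ^ 2)
    (ℓ : ℕ) (hℓ : ℓ = (Sstar \ S).card) (hℓ1 : 1 ≤ ℓ) :
    (ℓ : ℝ) * n * ρ * (Sstar.inf' hSne fun i => |β i|) ^ 2 ≤
      sqnorm ((1 - proj X S) *ᵥ (X *ᵥ β)) :=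
  stmt12_general X k Sstar S hScard hSstarcard β hsupp hSne ρ hρpos hρ ℓ hℓ
end
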